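/- arXiv:2601.05565 — 4 statements merged into one kernel-verified Lean document; each statement's English description precedes it below -/
import Mathlib

section
/- Let K be a field, p, α, β ∈ K, and let w, w̃, ŵ, ŵ̃ ∈ K. Define the 2×2 matrices U = [[-w̃, 1], [p² - α² - w·w̃, w]], V = [[-ŵ, 1], [p² - β² - w·ŵ, w]], Ṽ = [[-ŵ̃, 1], [p² - β² - w̃·ŵ̃, w̃]], Û = [[-ŵ̃, 1], [p² - α² - ŵ·ŵ̃, ŵ]]. Then Ṽ·U = Û·V if and only if (w̃ - ŵ)·(ŵ̃ - w) = α² - β². -/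
/-- Lax pair compatibility for lattice potential KdV:
`Ṽ·U = Û·V` iff `(w̃ - ŵ)(ŵ̃ - w) = α² - β²`. -/
theorem stmt0 {K : Type*} [Field K] (p α β w wt wh wth : K) :
    !![-wth, 1; p^2 - β^2 - wt*wth, wt] * !![-wt, 1; p^2 - α^2 - w*wt, w] =
      !![-wth, 1; p^2 - α^2 - wh*wth, wh] * !![-wh, 1; p^2 - β^2 - w*wh, w] ↔
    (wt - wh) * (wth - w) = α^2 - β^2 := by
  constructor
  · intro h
    have h00 := congrFun (congrFun h 0) 0
    simp [Matrix.mul_apply, Fin.sum_univ_two] at h00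
    linear_combination h00
  · intro h
    ext i j
    fin_cases i <;> fin_cases j <;>
      simp [Matrix.mul_apply, Fin.sum_univ_two] <;>
      first
        | linear_combination h
        | linear_combination -h
        | linear_combination wt * h
        | linear_combination -wt * h
        | linear_combination (wt + wh) * h
        | linear_combination -(wt + wh) * h
        | ring
end

section
/- Let K be a field with char K ≠ 2,3, let α, β, γ ∈ K be lattice parameters, and let w : ℤ³ → K. Define, for generic initial data w, w̃, ŵ, w̄ ∈ K (values at a vertex of an elementary cube and its three neighbors) with the pairwise differences of face values nonzero, the lpKdV face maps: ŵ̃ = w + (α² - β²)/(w̃ - ŵ), w̃̄ = w + (α² - γ²)/(w̃ - w̄), ŵ̄ = w + (β² - γ²)/(ŵ - w̄). Then the three possible computations of the triply shifted value, namely ŵ̃̄ computed as w̄ + (α² - β²)/(w̃̄ - ŵ̄), as ŵ + (α² - γ²)/(ŵ̃ - ŵ̄), and as w̃ + (β² - γ²)/(ŵ̃ - w̃̄), all coincide (whenever all denominators are nonzero). -/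
set_option maxHeartbeats 1000000 in
/-- 3D consistency (consistency around a cube) of the lattice potential KdV equation. -/
theorem stmt2 {K : Type*} [Field K] (hK2 : (2 : K) ≠ 0) (hK3 : (3 : K) ≠ 0)
    (α β γ w wt wh wb wth wtb whb : K)
    (h1 : wt - wh ≠ 0) (h2 : wt - wb ≠ 0) (h3 : wh - wb ≠ 0)
    (e1 : wth = w + (α^2 - β^2)/(wt - wh))
    (e2 : wtb = w + (α^2 - γ^2)/(wt - wb))
    (e3 : whb = w + (β^2 - γ^2)/(wh - wb))
    (h4 : wtb - whb ≠ 0) (h5 : wth - whb ≠ 0) (h6 : wth - wtb ≠ 0) :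
    wb + (α^2 - β^2)/(wtb - whb) = wh + (α^2 - γ^2)/(wth - whb) ∧
    wb + (α^2 - β^2)/(wtb - whb) = wt + (β^2 - γ^2)/(wth - wtb) := by
  set D : K := α^2*wh - α^2*wb + β^2*wb - β^2*wt + γ^2*wt - γ^2*wh with hDdef
  have d4 : wtb - whb = D / ((wt - wb) * (wh - wb)) := by
    rw [e2, e3]; field_simp; ring
  have d5 : wth - whb = D / ((wt - wh) * (wh - wb)) := by
    rw [e1, e3]; field_simp; ring
  have d6 : wth - wtb = D / ((wt - wh) * (wt - wb)) := by
    rw [e1, e2]; field_simp; ring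
  have hD : D ≠ 0 := by
    intro h0
    apply h4
    rw [d4, h0, zero_div]
  rw [d4, d5, d6, div_div_eq_mul_div, div_div_eq_mul_div, div_div_eq_mul_div]
  constructor <;> field_simp <;> ring
end

section
/- Let K be a field, α, β, p ∈ K, and consider the 3×3 Lax matrices U = [[-w̃, 1, 0], [-x̃, 0, 1], [p³-α³ + y·w̃ - w·x̃, -y, w]] and V = [[-ŵ, 1, 0], [-x̂, 0, 1], [p³-β³ + y·ŵ - w·x̂, -y, w]], together with their shifted versions Ṽ (with w→w̃, ŵ→ŵ̃, x̂→x̂̃, y→ỹ) and Û (with w→ŵ, w̃→ŵ̃, x̃→x̂̃, y→ŷ). Assume ŵ - w̃ ≠ 0. Then the compatibility condition Ṽ·U = Û·V holds if and only if the three-component lpBSQ system holds: ŵ̃ = (x̂ - x̃)/(ŵ - w̃), w = (ŷ - ỹ)/(ŵ - w̃), and x̂̃ = w·ŵ̃ - y + (β³ - α³)/(ŵ - w̃). -/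
/-- Lax compatibility `Ṽ·U = Û·V` is equivalent to the three-component lpBSQ system. -/
theorem stmt7 {K : Type*} [Field K] (α β p w wt wh wth x xt xh xth y yt yh : K)
    (hw : wh - wt ≠ 0) :
    !![-wth, 1, 0; -xth, 0, 1; p^3 - β^3 + yt*wth - wt*xth, -yt, wt] *
      !![-wt, 1, 0; -xt, 0, 1; p^3 - α^3 + y*wt - w*xt, -y, w] =
    !![-wth, 1, 0; -xth, 0, 1; p^3 - α^3 + yh*wth - wh*xth, -yh, wh] *
      !![-wh, 1, 0; -xh, 0, 1; p^3 - β^3 + y*wh - w*xh, -y, w] ↔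
    (wth = (xh - xt)/(wh - wt) ∧ w = (yh - yt)/(wh - wt) ∧
      xth = w*wth - y + (β^3 - α^3)/(wh - wt)) := by
  rw [Matrix.mul_fin_three, Matrix.mul_fin_three, ← Matrix.ext_iff]
  simp only [Fin.forall_fin_succ, Fin.forall_fin_zero_pi, Matrix.of_apply,
    Matrix.cons_val_zero, Matrix.cons_val_succ, Matrix.cons_val', Matrix.empty_val',
    Matrix.cons_val_fin_one, Matrix.head_fin_const, and_true]
  constructor
  · rintro ⟨⟨e1, -⟩, ⟨e2, -⟩, ⟨e3, e4, e5, -⟩, -⟩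
    refine ⟨?_, ?_, ?_⟩
    · rw [eq_div_iff hw]; linear_combination -e1
    · rw [eq_div_iff hw]; linear_combination -e5
    · field_simp
      linear_combination e4 + wth * e5
  · rintro ⟨hA, hB, hC⟩
    rw [eq_div_iff hw] at hA hB
    have h3 : xth * (wh - wt) = w * wth * (wh - wt) - y * (wh - wt) + (β^3 - α^3) := by
      rw [hC]; field_simp
    refine ⟨⟨?_, trivial, trivial, fun i => i.elim0⟩,
      ⟨?_, trivial, trivial, fun i => i.elim0⟩,
      ⟨?_, ?_, ?_, fun i => i.elim0⟩, fun i => i.elim0⟩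
    · linear_combination -hA
    · linear_combination -w * hA - h3
    · linear_combination (yh - w*wh) * hA + (xt - wt*wth) * hB - (wt + wh) * h3
    · linear_combination wth * hB + h3
    · linear_combination -hB
end

section
/- Let K be a field and α, β ∈ K. Suppose w, x, y : ℤ² → K satisfy (with tilde and hat denoting unit shifts in the two directions, assuming ŵ - w̃ ≠ 0 everywhere needed, and ŵ̂ - ŵ̃ ≠ 0, ŵ̃ - w̃̃ ≠ 0 at the relevant points) the three-component lpBSQ system: ŵ̃ = (x̂ - x̃)/(ŵ - w̃), w = (ŷ - ỹ)/(ŵ - w̃), x̂̃ = w·ŵ̃ - y + (β³ - α³)/(ŵ - w̃). Then w satisfies the nine-point lattice potential BSQ equation ŵ̂̃̃·(ŵ̂̃ - ŵ̃̃) + w·(ŵ - w̃) + (w̃·ŵ̃̃ - ŵ·ŵ̂̃) = (α³ - β³)/(ŵ̃ - w̃̃) - (α³ - β³)/(ŵ̂ - ŵ̃), where double tilde (resp. double hat) denotes two shifts in the first (resp. second) direction and mixed symbols denote mixed shifts. -/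
/-- Eliminating `x`, `y` from the three-component lpBSQ system yields the nine-point
lattice potential BSQ equation. -/
theorem stmt13 {K : Type*} [Field K] (α β : K) (w x y : ℤ × ℤ → K)
    (hw : ∀ n m : ℤ, w (n,m+1) - w (n+1,m) ≠ 0)
    (e1 : ∀ n m : ℤ, w (n+1,m+1) = (x (n,m+1) - x (n+1,m))/(w (n,m+1) - w (n+1,m)))
    (e2 : ∀ n m : ℤ, w (n,m) = (y (n,m+1) - y (n+1,m))/(w (n,m+1) - w (n+1,m)))
    (e3 : ∀ n m : ℤ, x (n+1,m+1) =
      w (n,m) * w (n+1,m+1) - y (n,m) + (β^3 - α^3)/(w (n,m+1) - w (n+1,m))) :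
    ∀ n m : ℤ,
      w (n+2,m+2) * (w (n+1,m+2) - w (n+2,m+1))
        + w (n,m) * (w (n,m+1) - w (n+1,m))
        + (w (n+1,m) * w (n+2,m+1) - w (n,m+1) * w (n+1,m+2))
      = (α^3 - β^3)/(w (n+1,m+1) - w (n+2,m))
        - (α^3 - β^3)/(w (n,m+2) - w (n+1,m+1)) := by
  intro n m
  have hn : n + 1 + 1 = n + 2 := by ring
  have hm : m + 1 + 1 = m + 2 := by ring
  have h1 := hw n m
  have h2 := hw (n+1) m
  have h3 := hw n (m+1)
  have h4 := hw (n+1) (m+1)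
  have E1 := e1 (n+1) (m+1)
  have E2 := e2 n m
  have E3a := e3 n (m+1)
  have E3b := e3 (n+1) m
  rw [hn, hm] at *
  rw [E1, E2, E3a, E3b]
  field_simp
  ring
end
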